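/- The multivariate formal power series A_d(u; p_1, …, p_d) := Σ_{r ≥ 1} Σ_{s ∈ ℤ_{≥0}^d} a_d(r;s) · u^r · p_1^{s_1}⋯p_d^{s_d} over ℚ satisfies the functional equation A_d = u + u·A_d + (p_1+⋯+p_d)·A_d + (p_1+⋯+p_d)·A_d²; equivalently, it satisfies the quadratic equation (p_1+⋯+p_d)·A_d² − (1 − u − (p_1+⋯+p_d))·A_d + u = 0. -/

import Mathlib

namespace MultiOp
mutual
inductive Atom (d : ℕ) : Type where
  | star : Atom d
  | op : Fin d → Mon d → Atom d
inductive Mon (d : ℕ) : Type where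
  | single : Atom d → Mon d
  | cons : Atom d → Mon d → Mon d
end

mutual
def Atom.deg {d : ℕ} : Atom d → ℕ
  | .star => 1
  | .op _ v => v.deg
def Mon.deg {d : ℕ} : Mon d → ℕ
  | .single a => a.deg
  | .cons a v => a.deg + v.deg
end

mutual
def Atom.mult {d : ℕ} : Atom d → Fin d → ℕ
  | .star, _ => 0
  | .op i v, j => (if i = j then 1 else 0) + v.mult j
def Mon.mult {d : ℕ} : Mon d → Fin d → ℕ
  | .single a, j => a.mult j
  | .cons a v, j => a.mult j + v.mult j
end

section Aux
variable {d : ℕ}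

mutual
theorem Atom.one_le_deg : ∀ a : Atom d, 1 ≤ a.deg
  | .star => le_refl 1
  | .op _ v => Mon.one_le_deg v
theorem Mon.one_le_deg : ∀ v : Mon d, 1 ≤ v.deg
  | .single a => Atom.one_le_deg a
  | .cons a v => le_trans (Atom.one_le_deg a) (Nat.le_add_right _ _)
end

noncomputable def WtA (a : Atom d) : Option (Fin d) →₀ ℕ :=
  Finsupp.equivFunOnFinite.symm fun o => o.elim a.deg a.mult

noncomputable def Wt (v : Mon d) : Option (Fin d) →₀ ℕ :=
  Finsupp.equivFunOnFinite.symm fun o => o.elim v.deg v.mult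

@[simp] theorem WtA_apply (a : Atom d) (o : Option (Fin d)) :
    WtA a o = o.elim a.deg a.mult := by
  simp [WtA]

@[simp] theorem Wt_apply (v : Mon d) (o : Option (Fin d)) :
    Wt v o = o.elim v.deg v.mult := by
  simp [Wt]

theorem Wt_single (a : Atom d) : Wt (.single a) = WtA a := by
  ext o; cases o <;> simp [Mon.deg, Mon.mult]

theorem Wt_cons (a : Atom d) (v : Mon d) : Wt (.cons a v) = WtA a + Wt v := by
  ext o; cases o <;> simp [Mon.deg, Mon.mult]

theorem WtA_star : WtA (.star : Atom d) = Finsupp.single none 1 := by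
  ext o; cases o <;> simp [Atom.deg, Atom.mult, Finsupp.single_apply]

theorem WtA_op (i : Fin d) (w : Mon d) :
    WtA (.op i w) = Finsupp.single (some i) 1 + Wt w := by
  ext o; cases o <;> simp [Atom.deg, Atom.mult, Finsupp.single_apply]

end Aux


section Aux2
variable {d : ℕ}

abbrev SumT (d : ℕ) : Type :=
  Unit ⊕ Mon d ⊕ (Fin d × Mon d) ⊕ (Fin d × Mon d × Mon d)

def toSum : Mon d → SumT d
  | .single .star => .inl ()
  | .cons .star v => .inr (.inl v)
  | .single (.op i w) => .inr (.inr (.inl (i, w)))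
  | .cons (.op i w) v => .inr (.inr (.inr (i, w, v)))

def ofSum : SumT d → Mon d
  | .inl _ => .single .star
  | .inr (.inl v) => .cons .star v
  | .inr (.inr (.inl (i, w))) => .single (.op i w)
  | .inr (.inr (.inr (i, w, v))) => .cons (.op i w) v

def decompE : Mon d ≃ SumT d where
  toFun := toSum
  invFun := ofSum
  left_inv := by rintro (a | ⟨a, v⟩) <;> rcases a with _ | ⟨i, w⟩ <;> rfl
  right_inv := by rintro (⟨⟩ | v | ⟨i, w⟩ | ⟨i, w, v⟩) <;> rfl

noncomputable def WS : SumT d → (Option (Fin d) →₀ ℕ)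
  | .inl _ => Finsupp.single none 1
  | .inr (.inl v) => Finsupp.single none 1 + Wt v
  | .inr (.inr (.inl (i, w))) => Finsupp.single (some i) 1 + Wt w
  | .inr (.inr (.inr (i, w, v))) => Finsupp.single (some i) 1 + Wt w + Wt v

theorem WS_toSum (v : Mon d) : WS (toSum v) = Wt v := by
  rcases v with (a | ⟨a, v⟩) <;> rcases a with _ | ⟨i, w⟩ <;>
    simp [toSum, WS, Wt_single, Wt_cons, WtA_star, WtA_op, add_assoc]

def Nsz (e : Option (Fin d) →₀ ℕ) : ℕ := ∑ o : Option (Fin d), e o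

theorem Nsz_add (p q : Option (Fin d) →₀ ℕ) : Nsz (p + q) = Nsz p + Nsz q := by
  simp [Nsz, Finset.sum_add_distrib]

theorem Nsz_single (s : Option (Fin d)) : Nsz (Finsupp.single s 1) = 1 := by
  simp [Nsz, Finsupp.single_apply]

theorem le_Nsz (e : Option (Fin d) →₀ ℕ) (o : Option (Fin d)) : e o ≤ Nsz e :=
  Finset.single_le_sum (fun _ _ => Nat.zero_le _) (Finset.mem_univ o)

theorem one_le_Nsz_Wt (v : Mon d) : 1 ≤ Nsz (Wt v) :=
  le_trans (by simpa using v.one_le_deg) (le_Nsz (Wt v) none)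

def shiftEquiv (s : Option (Fin d)) (e : Option (Fin d) →₀ ℕ)
    (h : Finsupp.single s 1 ≤ e) :
    {v : Mon d // Finsupp.single s 1 + Wt v = e} ≃
      {v : Mon d // Wt v = e - Finsupp.single s 1} :=
  Equiv.subtypeEquivRight fun v => by
    constructor
    · rintro rfl; rw [add_tsub_cancel_left]
    · intro h'; rw [h', add_tsub_cancel_of_le h]

theorem empty_shift (s : Option (Fin d)) (e : Option (Fin d) →₀ ℕ)
    (h : ¬ Finsupp.single s 1 ≤ e) :
    IsEmpty {v : Mon d // Finsupp.single s 1 + Wt v = e} :=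
  ⟨fun x => h (x.2 ▸ le_self_add)⟩

def shiftEquiv2 (s : Option (Fin d)) (e : Option (Fin d) →₀ ℕ)
    (h : Finsupp.single s 1 ≤ e) :
    {x : Mon d × Mon d // Finsupp.single s 1 + Wt x.1 + Wt x.2 = e} ≃
      {x : Mon d × Mon d // Wt x.1 + Wt x.2 = e - Finsupp.single s 1} :=
  Equiv.subtypeEquivRight fun x => by
    rw [add_assoc]
    constructor
    · rintro rfl; rw [add_tsub_cancel_left]
    · intro h'; rw [h', add_tsub_cancel_of_le h]

theorem empty_shift2 (s : Option (Fin d)) (e : Option (Fin d) →₀ ℕ)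
    (h : ¬ Finsupp.single s 1 ≤ e) :
    IsEmpty {x : Mon d × Mon d // Finsupp.single s 1 + Wt x.1 + Wt x.2 = e} :=
  ⟨fun x => h (x.2 ▸ le_trans le_self_add le_self_add)⟩

noncomputable def pairFiberEquiv (m : Option (Fin d) →₀ ℕ) :
    {x : Mon d × Mon d // Wt x.1 + Wt x.2 = m} ≃
      Σ pq : (Finset.HasAntidiagonal.antidiagonal m : Finset _),
        {v : Mon d // Wt v = pq.1.1} × {v : Mon d // Wt v = pq.1.2} where
  toFun x := ⟨⟨(Wt x.1.1, Wt x.1.2), Finset.HasAntidiagonal.mem_antidiagonal.mpr x.2⟩,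
    ⟨x.1.1, rfl⟩, ⟨x.1.2, rfl⟩⟩
  invFun y := ⟨(y.2.1.1, y.2.2.1), by
    rw [y.2.1.2, y.2.2.2]; exact Finset.HasAntidiagonal.mem_antidiagonal.mp y.1.2⟩
  left_inv x := rfl
  right_inv := by
    rintro ⟨⟨⟨p, q⟩, hpq⟩, ⟨v, hv⟩, ⟨w, hw⟩⟩
    dsimp only at hv hw
    subst hv; subst hw; rfl

noncomputable def masterEquiv (e : Option (Fin d) →₀ ℕ) :
    {v : Mon d // Wt v = e} ≃
      ({_u : Unit // Finsupp.single (none : Option (Fin d)) 1 = e} ⊕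
       ({v : Mon d // Finsupp.single none 1 + Wt v = e} ⊕
        ({x : Fin d × Mon d // Finsupp.single (some x.1) 1 + Wt x.2 = e} ⊕
         {x : Fin d × Mon d × Mon d //
           Finsupp.single (some x.1) 1 + Wt x.2.1 + Wt x.2.2 = e}))) :=
  ((decompE.subtypeEquiv (p := fun v => Wt v = e) (q := fun x => WS x = e)
      fun v => by show Wt v = e ↔ WS (toSum v) = e; rw [WS_toSum]).trans
    Equiv.subtypeSum).trans <|
  Equiv.sumCongr (Equiv.subtypeEquivRight fun u => by simp [WS]) <|
  Equiv.subtypeSum.trans <|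
  Equiv.sumCongr (Equiv.subtypeEquivRight fun v => by simp [WS]) <|
  Equiv.subtypeSum.trans <|
  Equiv.sumCongr
    (Equiv.subtypeEquivRight fun x => by obtain ⟨i, w⟩ := x; simp [WS])
    (Equiv.subtypeEquivRight fun x => by obtain ⟨i, w, v⟩ := x; simp [WS])


noncomputable def c (e : Option (Fin d) →₀ ℕ) : ℕ :=
  Nat.card {v : Mon d // Wt v = e}

theorem Nsz_sub_lt {s : Option (Fin d)} {e : Option (Fin d) →₀ ℕ}
    (h : Finsupp.single s 1 ≤ e) :
    Nsz (e - Finsupp.single s 1) + 1 = Nsz e := by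
  have h3 : Finsupp.single s 1 + (e - Finsupp.single s 1) = e :=
    add_tsub_cancel_of_le h
  have h4 := congrArg Nsz h3
  rw [Nsz_add, Nsz_single] at h4
  omega

theorem finite_fiber (e : Option (Fin d) →₀ ℕ) :
    Finite {v : Mon d // Wt v = e} := by
  suffices H : ∀ n (e : Option (Fin d) →₀ ℕ), Nsz e ≤ n →
      Finite {v : Mon d // Wt v = e} from H (Nsz e) e le_rfl
  intro n
  induction n with
  | zero =>
    intro e he
    have : IsEmpty {v : Mon d // Wt v = e} :=
      ⟨fun x => by have h1 := one_le_Nsz_Wt x.1; rw [x.2] at h1; omega⟩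
    exact Finite.of_subsingleton
  | succ n ih =>
    intro e he
    have h2 : ∀ s : Option (Fin d),
        Finite {v : Mon d // Finsupp.single s 1 + Wt v = e} := by
      intro s
      by_cases h : Finsupp.single s 1 ≤ e
      · have hle : Nsz (e - Finsupp.single s 1) ≤ n := by
          have := Nsz_sub_lt h; omega
        have := ih _ hle
        exact Finite.of_equiv _ (shiftEquiv s e h).symm
      · have := empty_shift s e h
        exact Finite.of_subsingleton
    have h3 : ∀ s : Option (Fin d),
        Finite {x : Mon d × Mon d //
          Finsupp.single s 1 + Wt x.1 + Wt x.2 = e} := by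
      intro s
      by_cases h : Finsupp.single s 1 ≤ e
      · have hle : Nsz (e - Finsupp.single s 1) ≤ n := by
          have := Nsz_sub_lt h; omega
        haveI : ∀ pq : (Finset.HasAntidiagonal.antidiagonal (e - Finsupp.single s 1) : Finset _),
            Finite ({v : Mon d // Wt v = pq.1.1} × {v : Mon d // Wt v = pq.1.2}) := by
          rintro ⟨⟨p, q⟩, hpq⟩
          rw [Finset.HasAntidiagonal.mem_antidiagonal] at hpq
          have hNs := congrArg Nsz hpq
          rw [Nsz_add] at hNs
          dsimp only at hNs
          haveI := ih p (by omega)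
          haveI := ih q (by omega)
          infer_instance
        exact Finite.of_equiv _ ((shiftEquiv2 s e h).trans (pairFiberEquiv _)).symm
      · have := empty_shift2 s e h
        exact Finite.of_subsingleton
    haveI : Finite {x : Fin d × Mon d //
        Finsupp.single (some x.1) 1 + Wt x.2 = e} := by
      haveI : ∀ i : Fin d,
          Finite {w : Mon d // Finsupp.single (some i) 1 + Wt w = e} :=
        fun i => h2 (some i)
      exact Finite.of_equiv _ (Equiv.subtypeProdEquivSigmaSubtype
        (fun (i : Fin d) (w : Mon d) => Finsupp.single (some i) 1 + Wt w = e)).symm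
    haveI : Finite {x : Fin d × Mon d × Mon d //
        Finsupp.single (some x.1) 1 + Wt x.2.1 + Wt x.2.2 = e} := by
      haveI : ∀ i : Fin d, Finite {y : Mon d × Mon d //
          Finsupp.single (some i) 1 + Wt y.1 + Wt y.2 = e} :=
        fun i => h3 (some i)
      exact Finite.of_equiv _ (Equiv.subtypeProdEquivSigmaSubtype
        (fun (i : Fin d) (y : Mon d × Mon d) =>
          Finsupp.single (some i) 1 + Wt y.1 + Wt y.2 = e)).symm
    haveI := h2 (none : Option (Fin d))
    exact Finite.of_equiv _ (masterEquiv e).symm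

instance (e : Option (Fin d) →₀ ℕ) : Finite {v : Mon d // Wt v = e} :=
  finite_fiber e

instance (s : Option (Fin d)) (e : Option (Fin d) →₀ ℕ) :
    Finite {v : Mon d // Finsupp.single s 1 + Wt v = e} := by
  by_cases h : Finsupp.single s 1 ≤ e
  · exact Finite.of_equiv _ (shiftEquiv s e h).symm
  · haveI := empty_shift s e h
    exact Finite.of_subsingleton

instance (m : Option (Fin d) →₀ ℕ) :
    Finite {x : Mon d × Mon d // Wt x.1 + Wt x.2 = m} :=
  Finite.of_equiv _ (pairFiberEquiv m).symm

instance (s : Option (Fin d)) (e : Option (Fin d) →₀ ℕ) :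
    Finite {x : Mon d × Mon d // Finsupp.single s 1 + Wt x.1 + Wt x.2 = e} := by
  by_cases h : Finsupp.single s 1 ≤ e
  · exact Finite.of_equiv _ (shiftEquiv2 s e h).symm
  · haveI := empty_shift2 s e h
    exact Finite.of_subsingleton

instance (e : Option (Fin d) →₀ ℕ) :
    Finite {x : Fin d × Mon d // Finsupp.single (some x.1) 1 + Wt x.2 = e} :=
  Finite.of_equiv _ (Equiv.subtypeProdEquivSigmaSubtype
    (fun (i : Fin d) (w : Mon d) => Finsupp.single (some i) 1 + Wt w = e)).symm

instance (e : Option (Fin d) →₀ ℕ) :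
    Finite {x : Fin d × Mon d × Mon d //
      Finsupp.single (some x.1) 1 + Wt x.2.1 + Wt x.2.2 = e} :=
  Finite.of_equiv _ (Equiv.subtypeProdEquivSigmaSubtype
    (fun (i : Fin d) (y : Mon d × Mon d) =>
      Finsupp.single (some i) 1 + Wt y.1 + Wt y.2 = e)).symm

theorem Nat_card_sigma {ι : Type*} [Fintype ι] {f : ι → Type*}
    [∀ i, Finite (f i)] :
    Nat.card (Σ i, f i) = ∑ i, Nat.card (f i) := by
  haveI := fun i => Fintype.ofFinite (f i)
  simp [Nat.card_eq_fintype_card]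

theorem card_unitSub (P : Prop) [Decidable P] :
    Nat.card {_u : Unit // P} = if P then 1 else 0 := by
  by_cases h : P
  · rw [if_pos h]
    haveI : Unique {_u : Unit // P} := ⟨⟨⟨(), h⟩⟩, by rintro ⟨⟨⟩, _⟩; rfl⟩
    exact Nat.card_unique
  · rw [if_neg h]
    haveI : IsEmpty {_u : Unit // P} := ⟨fun x => h x.2⟩
    exact Nat.card_of_isEmpty

theorem card2 (s : Option (Fin d)) (e : Option (Fin d) →₀ ℕ) [Decidable (Finsupp.single s 1 ≤ e)] :
    Nat.card {v : Mon d // Finsupp.single s 1 + Wt v = e} =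
      if Finsupp.single s 1 ≤ e then c (e - Finsupp.single s 1) else 0 := by
  by_cases h : Finsupp.single s 1 ≤ e
  · rw [if_pos h]; exact Nat.card_congr (shiftEquiv s e h)
  · rw [if_neg h]
    haveI := empty_shift s e h
    exact Nat.card_of_isEmpty

theorem card4 (s : Option (Fin d)) (e : Option (Fin d) →₀ ℕ) [Decidable (Finsupp.single s 1 ≤ e)] :
    Nat.card {x : Mon d × Mon d // Finsupp.single s 1 + Wt x.1 + Wt x.2 = e} =
      if Finsupp.single s 1 ≤ e then
        ∑ pq ∈ Finset.HasAntidiagonal.antidiagonal (e - Finsupp.single s 1), c pq.1 * c pq.2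
      else 0 := by
  by_cases h : Finsupp.single s 1 ≤ e
  · rw [if_pos h]
    rw [Nat.card_congr ((shiftEquiv2 s e h).trans (pairFiberEquiv _)),
      Nat_card_sigma]
    refine (Finset.sum_coe_sort (Finset.HasAntidiagonal.antidiagonal (e - Finsupp.single s 1))
      (fun pq : (Option (Fin d) →₀ ℕ) × (Option (Fin d) →₀ ℕ) => Nat.card
      ({v : Mon d // Wt v = pq.1} × {v : Mon d // Wt v = pq.2}))).trans ?_
    exact Finset.sum_congr rfl fun pq _ => Nat.card_prod _ _
  · rw [if_neg h]
    haveI := empty_shift2 s e h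
    exact Nat.card_of_isEmpty

theorem c_rec (e : Option (Fin d) →₀ ℕ) :
    c e = (if Finsupp.single (none : Option (Fin d)) 1 = e then 1 else 0)
      + (if Finsupp.single (none : Option (Fin d)) 1 ≤ e then
          c (e - Finsupp.single none 1) else 0)
      + (∑ i : Fin d, if Finsupp.single (some i) 1 ≤ e then
          c (e - Finsupp.single (some i) 1) else 0)
      + (∑ i : Fin d, if Finsupp.single (some i) 1 ≤ e then
          ∑ pq ∈ Finset.HasAntidiagonal.antidiagonal (e - Finsupp.single (some i) 1),
            c pq.1 * c pq.2 else 0) := by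
  classical
  rw [show c e = Nat.card _ from Nat.card_congr (masterEquiv e)]
  rw [Nat.card_sum, Nat.card_sum, Nat.card_sum]
  rw [card_unitSub, card2]
  rw [Nat.card_congr (Equiv.subtypeProdEquivSigmaSubtype
    (fun (i : Fin d) (w : Mon d) => Finsupp.single (some i) 1 + Wt w = e)),
    Nat_card_sigma]
  rw [Nat.card_congr (Equiv.subtypeProdEquivSigmaSubtype
    (fun (i : Fin d) (y : Mon d × Mon d) =>
      Finsupp.single (some i) 1 + Wt y.1 + Wt y.2 = e)),
    Nat_card_sigma]
  simp only [card2, card4]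
  ring

end Aux2

noncomputable def a (d r : ℕ) (s : Fin d → ℕ) : ℕ :=
  Nat.card {v : Mon d // v.deg = r ∧ v.mult = s}

noncomputable def b (d ℓ n : ℕ) : ℕ :=
  Nat.card {v : Mon d // ℓ * v.deg + 2 * (∑ i, v.mult i) = n}

noncomputable def A (d : ℕ) : MvPowerSeries (Option (Fin d)) ℚ :=
  fun e => (a d (e none) (fun i => e (some i)) : ℚ)

noncomputable def B (d ℓ : ℕ) : PowerSeries ℚ :=
  PowerSeries.mk fun n => (b d ℓ n : ℚ)

def narayana (n k : ℕ) : ℚ := (n.choose k * n.choose (k + 1) : ℚ) / n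

section Final
variable {d : ℕ}

theorem a_eq_c (e : Option (Fin d) →₀ ℕ) :
    a d (e none) (fun i => e (some i)) = c e :=
  Nat.card_congr <| Equiv.subtypeEquivRight fun v => by
    constructor
    · rintro ⟨h1, h2⟩
      ext o
      cases o with
      | none => simpa using h1
      | some i => simpa using congrFun h2 i
    · intro h
      constructor
      · have := congrArg (fun f : Option (Fin d) →₀ ℕ => f none) h
        simpa using this
      · funext i
        have := congrArg (fun f : Option (Fin d) →₀ ℕ => f (some i)) h
        simpa using this

theorem coeff_A (e : Option (Fin d) →₀ ℕ) :
    MvPowerSeries.coeff e (A d) = (c e : ℚ) := by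
  show A d e = (c e : ℚ)
  rw [A, a_eq_c]

theorem coeff_X_mul' (s : Option (Fin d)) (e : Option (Fin d) →₀ ℕ)
    (f : MvPowerSeries (Option (Fin d)) ℚ) :
    MvPowerSeries.coeff e (MvPowerSeries.X s * f) =
      if Finsupp.single s 1 ≤ e then
        MvPowerSeries.coeff (e - Finsupp.single s 1) f else 0 := by
  rw [show (MvPowerSeries.X s : MvPowerSeries (Option (Fin d)) ℚ)
      = MvPowerSeries.monomial (Finsupp.single s 1) 1 from rfl,
    MvPowerSeries.coeff_monomial_mul]
  split <;> simp

theorem coeff_sumX_mul (e : Option (Fin d) →₀ ℕ)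
    (f : MvPowerSeries (Option (Fin d)) ℚ) :
    MvPowerSeries.coeff e ((∑ i : Fin d, MvPowerSeries.X (some i)) * f) =
      ∑ i : Fin d, if Finsupp.single (some i) 1 ≤ e then
        MvPowerSeries.coeff (e - Finsupp.single (some i) 1) f else 0 := by
  rw [Finset.sum_mul, map_sum]
  exact Finset.sum_congr rfl fun i _ => coeff_X_mul' _ _ _

open MvPowerSeries in
theorem A_functional_equation (d : ℕ) (hd : 1 ≤ d) :
    A d = X (none : Option (Fin d)) + X (none : Option (Fin d)) * A d
        + (∑ i : Fin d, X (some i)) * A d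
        + (∑ i : Fin d, X (some i)) * (A d) ^ 2 ∧
    (∑ i : Fin d, X (some i)) * (A d) ^ 2
        - (1 - X (none : Option (Fin d)) - ∑ i : Fin d, X (some i)) * A d
        + X (none : Option (Fin d)) = 0 := by
  have key : A d = X (none : Option (Fin d)) + X (none : Option (Fin d)) * A d
      + (∑ i : Fin d, X (some i)) * A d
      + (∑ i : Fin d, X (some i)) * (A d) ^ 2 := by
    ext e
    rw [map_add, map_add, map_add, coeff_A, sq,
      coeff_sumX_mul, coeff_sumX_mul, coeff_X_mul', MvPowerSeries.coeff_X]
    have hmul : ∀ m : Option (Fin d) →₀ ℕ,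
        MvPowerSeries.coeff m (A d * A d) =
          ∑ pq ∈ Finset.HasAntidiagonal.antidiagonal m, (c pq.1 : ℚ) * (c pq.2 : ℚ) := by
      intro m
      rw [MvPowerSeries.coeff_mul]
      exact Finset.sum_congr rfl fun pq _ => by rw [coeff_A, coeff_A]
    simp only [coeff_A, hmul]
    rw [c_rec e]
    push_cast [apply_ite (fun n : ℕ => (n : ℚ))]
    simp [eq_comm]
  exact ⟨key, by linear_combination -key⟩

end Final

end MultiOp
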